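/- Let q̃_{j1} ≤ q̃_{j2} ≤ ... ≤ q̃_{jn} be the sorted values of q̃ and let K be any set of m < n driver nodes. Then λ_min(W) ≤ q̃_{j_{m+1}}. -/

import Mathlib

/-!
Among the first `m + 1` sorted nodes `j_1, …, j_{m+1}` at least one, say `j`, is not a driver
node. Testing `W` against `e_j` bounds `λ_min(W)` by `W_jj = Σ_{i∈K} ε_{i→j}`, which is a subsum of
the nonnegative terms defining `q̃_j` because `j ∉ K`; and `q̃_j ≤ q̃_{j_{m+1}}` by sortedness.
-/

open Matrix Finset

/-- Single-driver controllability Gramian `W^(i) = Σ_{t<T} A^t eᵢ eᵢᵀ (Aᵀ)^t`. -/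
noncomputable def singleGram {n : ℕ} (A : Matrix (Fin n) (Fin n) ℝ) (T : ℕ) (i : Fin n) :
    Matrix (Fin n) (Fin n) ℝ :=
  ∑ t ∈ Finset.range T, A ^ t * Matrix.single i i (1 : ℝ) * (Aᵀ) ^ t

/-- `q̃_j = Σ_{i≠j} ε_{i→j}` with `ε_{i→j} = W^(i)_{jj}`. -/
noncomputable def qTilde {n : ℕ} (A : Matrix (Fin n) (Fin n) ℝ) (T : ℕ) (j : Fin n) : ℝ :=
  ∑ i ∈ Finset.univ.filter (· ≠ j), singleGram A T i j j

open scoped ComplexOrder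

namespace Matrix.IsHermitian

variable {𝕜 ι : Type*} [RCLike 𝕜] [Fintype ι] [DecidableEq ι] {A : Matrix ι ι 𝕜}

theorem posSemidef_sub_smul_one (hA : A.IsHermitian) {c : ℝ} (hc : ∀ k, c ≤ hA.eigenvalues k) :
    (A - (c : 𝕜) • (1 : Matrix ι ι 𝕜)).PosSemidef := by
  have hdiagonal : diagonal (RCLike.ofReal ∘ fun k => hA.eigenvalues k - c) =
      diagonal (RCLike.ofReal ∘ hA.eigenvalues) - (c : 𝕜) • (1 : Matrix ι ι 𝕜) := by
    ext a b
    by_cases h : a = b <;> simp [h, Algebra.algebraMap_eq_smul_one, sub_smul]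
  have hshift : A - (c : 𝕜) • (1 : Matrix ι ι 𝕜) = Unitary.conjStarAlgAut 𝕜 _
      hA.eigenvectorUnitary (diagonal (RCLike.ofReal ∘ fun k => hA.eigenvalues k - c)) := by
    rw [hdiagonal, map_sub, map_smul, map_one, ← hA.spectral_theorem]
  rw [hshift, Unitary.conjStarAlgAut_apply, star_eq_conjTranspose]
  exact (PosSemidef.diagonal fun k => by simpa using hc k).mul_mul_conjTranspose_same _

theorem iInf_eigenvalues_le_re_apply_self (hA : A.IsHermitian) (j : ι) :
    ⨅ k, hA.eigenvalues k ≤ RCLike.re (A j j) := by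
  have hdiag := (hA.posSemidef_sub_smul_one fun k =>
    ciInf_le (Set.finite_range hA.eigenvalues).bddBelow k).diag_nonneg (i := j)
  rw [sub_apply, smul_apply, one_apply_eq, smul_eq_mul, mul_one] at hdiag
  simpa using (RCLike.nonneg_iff.mp hdiag).1

end Matrix.IsHermitian

theorem posSemidef_singleGram {n : ℕ} (A : Matrix (Fin n) (Fin n) ℝ) (T : ℕ) (i : Fin n) :
    (singleGram A T i).PosSemidef := by
  refine posSemidef_sum _ fun t _ => ?_
  rw [← transpose_pow, ← conjTranspose_eq_transpose_of_trivial, ← diagonal_single]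
  exact (PosSemidef.diagonal (Pi.single_nonneg.mpr zero_le_one)).mul_mul_conjTranspose_same _

theorem sum_singleGram_apply_self_le_qTilde {n : ℕ} (A : Matrix (Fin n) (Fin n) ℝ) (T : ℕ)
    {K : Finset (Fin n)} {j : Fin n} (hj : j ∉ K) :
    (∑ i ∈ K, singleGram A T i) j j ≤ qTilde A T j := by
  rw [Matrix.sum_apply, qTilde]
  refine Finset.sum_le_sum_of_subset_of_nonneg (fun i hi => ?_)
    fun i _ _ => (posSemidef_singleGram A T i).diag_nonneg
  simp only [Finset.mem_filter, Finset.mem_univ, true_and]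
  rintro rfl
  exact hj hi

theorem Fin.exists_le_apply_notMem {α : Type*} {n m : ℕ} (hm : m < n) (f : Fin n ↪ α)
    {s : Finset α} (hs : s.card ≤ m) : ∃ k ≤ (⟨m, hm⟩ : Fin n), f k ∉ s := by
  have hcard : s.card < ((Finset.Iic (⟨m, hm⟩ : Fin n)).map f).card := by
    rw [Finset.card_map, Fin.card_Iic]
    exact Nat.lt_succ_of_le hs
  obtain ⟨_, hmem, hnot⟩ := Finset.exists_mem_notMem_of_card_lt_card hcard
  obtain ⟨k, hk, rfl⟩ := Finset.mem_map.mp hmem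
  exact ⟨k, Finset.mem_Iic.mp hk, hnot⟩

/-- If `(j_1,…,j_n)` (here the permutation `σ`) sorts `q̃` increasingly and `|K| = m < n`,
then `λ_min(W) ≤ q̃_{j_{m+1}}`. -/
theorem lambda_min_le_sorted_qTilde {n : ℕ} (A : Matrix (Fin n) (Fin n) ℝ) (T : ℕ)
    (K : Finset (Fin n)) (m : ℕ) (hKcard : K.card = m) (hm : m < n)
    (σ : Equiv.Perm (Fin n)) (hsorted : Monotone fun k => qTilde A T (σ k))
    (hW : (∑ i ∈ K, singleGram A T i).IsHermitian) :
    ⨅ k : Fin n, hW.eigenvalues k ≤ qTilde A T (σ ⟨m, hm⟩) := by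
  obtain ⟨k, hk, hkK⟩ := Fin.exists_le_apply_notMem hm σ.toEmbedding hKcard.le
  calc ⨅ k : Fin n, hW.eigenvalues k
      ≤ (∑ i ∈ K, singleGram A T i) (σ k) (σ k) := hW.iInf_eigenvalues_le_re_apply_self (σ k)
    _ ≤ qTilde A T (σ k) := sum_singleGram_apply_self_le_qTilde A T hkK
    _ ≤ qTilde A T (σ ⟨m, hm⟩) := hsorted hk
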